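/- Let p : X → [0,1] be measurable on (X, P_X), U uniform on [0,1], R = ∫_X 1_{p(x) > U} P_X(dx), and F_R^{-1} the quantile function of R. Then for all α ∈ (0,1): (1/α)∫_0^α F_R^{-1}(t) dt = 1 − ∫_X min(1, (1−p(x))/α) P_X(dx), and (1/(1−α))∫_α^1 F_R^{-1}(t) dt = ∫_X min(1, p(x)/(1−α)) P_X(dx). -/

import Mathlib

/-!
Write `g u = μ {x | u < p x}`, so that `R = g ∘ U` with `g` antitone and right-continuous.
For `t ∈ (0, 1]`: if `g (1 - t) ≤ s` then `{R ≤ s} ⊇ {U ≥ 1 - t}`, an event of probability `t`;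
otherwise right-continuity gives `v > 1 - t` with `s < g v`, and `{R ≤ s} ⊆ {U > v}` has
probability `< t`. Hence `F_R⁻¹ t = g (1 - t)`. Substituting `u = 1 - t` and applying Tonelli to
`{(u, x) | u < p x}`, `∫_a^b g u du = ∫ |(a, b) ∩ (-∞, p x)| dμ = ∫ max (min b (p x) - a) 0 dμ`,
which for `(a, b) = (1 - α, 1)` and `(0, 1 - α)` gives the two formulas.
-/

open MeasureTheory ProbabilityTheory Set

noncomputable def quantile {Ω : Type*} [MeasurableSpace Ω] (P : Measure Ω) (R : Ω → ℝ)
    (a : ℝ) : ℝ :=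
  sInf {t | a ≤ P.real {ω | R ω ≤ t}}

section Uniform

variable {Ω : Type*} [MeasurableSpace Ω] {P : Measure Ω} {U : Ω → ℝ}

lemma measureReal_preimage_eq_of_map_eq_restrict_Icc (hUm : Measurable U)
    (hU : P.map U = volume.restrict (Icc 0 1)) {S : Set ℝ} (hS : MeasurableSet S) :
    P.real (U ⁻¹' S) = volume.real (S ∩ Icc 0 1) := by
  rw [← map_measureReal_apply hUm hS, hU, measureReal_restrict_apply hS]

variable [IsFiniteMeasure P]

lemma le_measureReal_antitone_comp_le_iff (hUm : Measurable U)
    (hU : P.map U = volume.restrict (Icc 0 1)) {g : ℝ → ℝ} (hg : Antitone g) {a : ℝ}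
    (ha : a ∈ Ioc 0 1) (hgc : ContinuousWithinAt g (Ioi (1 - a)) (1 - a)) (s : ℝ) :
    a ≤ P.real {ω | g (U ω) ≤ s} ↔ g (1 - a) ≤ s := by
  obtain ⟨ha0, ha1⟩ := ha
  constructor
  · intro h
    by_contra! hs
    obtain ⟨v, hsv, hv⟩ : ∃ v, s < g v ∧ 1 - a < v :=
      ((hgc.eventually (lt_mem_nhds hs)).and self_mem_nhdsWithin).exists
    have hlt : P.real {ω | g (U ω) ≤ s} ≤ max (1 - v) 0 := calc
      P.real {ω | g (U ω) ≤ s} ≤ P.real (U ⁻¹' Ioi v) :=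
          measureReal_mono fun ω hω => lt_of_not_ge fun hUv => (hsv.trans_le (hg hUv)).not_ge hω
      _ = volume.real (Ioi v ∩ Icc 0 1) :=
          measureReal_preimage_eq_of_map_eq_restrict_Icc hUm hU measurableSet_Ioi
      _ ≤ volume.real (Ioc v 1) :=
          measureReal_mono (fun t ht => ⟨ht.1, ht.2.2⟩) measure_Ioc_lt_top.ne
      _ = max (1 - v) 0 := Real.volume_real_Ioc
    linarith [max_lt (show 1 - v < a by linarith) ha0]
  · intro hs
    calc a = volume.real (Icc (1 - a) 1) := by simp [Real.volume_real_Icc, ha0.le]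
      _ ≤ volume.real (Ici (1 - a) ∩ Icc 0 1) :=
          measureReal_mono (fun t ht => ⟨ht.1, by linarith [ht.1], ht.2⟩)
            ((measure_mono inter_subset_right).trans_lt measure_Icc_lt_top).ne
      _ = P.real (U ⁻¹' Ici (1 - a)) :=
          (measureReal_preimage_eq_of_map_eq_restrict_Icc hUm hU measurableSet_Ici).symm
      _ ≤ P.real {ω | g (U ω) ≤ s} := measureReal_mono fun ω hω => (hg hω).trans hs

lemma quantile_antitone_comp_of_map_eq_restrict_Icc (hUm : Measurable U)
    (hU : P.map U = volume.restrict (Icc 0 1)) {g : ℝ → ℝ} (hg : Antitone g) {a : ℝ}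
    (ha : a ∈ Ioc 0 1) (hgc : ContinuousWithinAt g (Ioi (1 - a)) (1 - a)) :
    quantile P (g ∘ U) a = g (1 - a) := by
  simp only [quantile, Function.comp_apply, le_measureReal_antitone_comp_le_iff hUm hU hg ha hgc]
  exact csInf_Ici

end Uniform

section Survival

variable {X : Type*} [MeasurableSpace X] {μ : Measure X} {p : X → ℝ}

lemma antitone_measure_lt : Antitone fun u => μ {x | u < p x} :=
  fun _ _ huv => measure_mono fun _ hx => huv.trans_lt hx

lemma antitone_measureReal_lt [IsFiniteMeasure μ] : Antitone fun u => μ.real {x | u < p x} :=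
  fun _ _ huv => ENNReal.toReal_mono (measure_ne_top _ _) (antitone_measure_lt huv)

lemma continuousWithinAt_Ici_measureReal_lt [IsProbabilityMeasure μ] (hp : Measurable p)
    (u : ℝ) : ContinuousWithinAt (fun u => μ.real {x | u < p x}) (Ici u) u := by
  have : IsProbabilityMeasure (μ.map p) := Measure.isProbabilityMeasure_map hp.aemeasurable
  have hcdf : (fun u => μ.real {x | u < p x}) = fun u => 1 - cdf (μ.map p) u := by
    ext u
    rw [cdf_eq_real, ← probReal_compl_eq_one_sub measurableSet_Iic, compl_Iic,
      map_measureReal_apply hp measurableSet_Ioi]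
    rfl
  rw [hcdf]
  exact continuousWithinAt_const.sub ((cdf _).right_continuous u)

lemma setLIntegral_measure_lt [SFinite μ] (hp : Measurable p) {S : Set ℝ} (hS : MeasurableSet S) :
    ∫⁻ u in S, μ {x | u < p x} = ∫⁻ x, volume (S ∩ Iio (p x)) ∂μ := by
  have hE : MeasurableSet {q : ℝ × X | q.1 < p q.2} :=
    measurableSet_lt measurable_fst (hp.comp measurable_snd)
  calc ∫⁻ u in S, μ {x | u < p x} = ((volume.restrict S).prod μ) {q | q.1 < p q.2} :=
        (Measure.prod_apply hE).symm
    _ = ∫⁻ x, volume.restrict S (Iio (p x)) ∂μ := Measure.prod_apply_symm hE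
    _ = ∫⁻ x, volume (S ∩ Iio (p x)) ∂μ := by simp_rw [Measure.restrict_apply' hS, inter_comm]

lemma intervalIntegral_measureReal_lt [IsFiniteMeasure μ] (hp : Measurable p) {a b : ℝ}
    (hab : a ≤ b) :
    ∫ u in a..b, μ.real {x | u < p x} = ∫ x, max (min b (p x) - a) 0 ∂μ := by
  rw [intervalIntegral.integral_of_le hab, integral_Ioc_eq_integral_Ioo]
  calc ∫ u in Ioo a b, μ.real {x | u < p x}
      = (∫⁻ u in Ioo a b, μ {x | u < p x}).toReal :=
        integral_toReal antitone_measure_lt.measurable.aemeasurable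
          (ae_of_all _ fun _ => measure_lt_top _ _)
    _ = (∫⁻ x, ENNReal.ofReal (min b (p x) - a) ∂μ).toReal := by
        simp_rw [setLIntegral_measure_lt hp measurableSet_Ioo, Ioo_inter_Iio, Real.volume_Ioo]
    _ = ∫ x, max (min b (p x) - a) 0 ∂μ := by
        rw [← integral_toReal (by fun_prop) (ae_of_all _ fun _ => ENNReal.ofReal_lt_top)]
        simp_rw [ENNReal.toReal_ofReal']

end Survival

lemma intervalIntegral_quantile_measureReal_lt {Ω X : Type*} [MeasurableSpace Ω]
    [MeasurableSpace X] {P : Measure Ω} [IsFiniteMeasure P] {μ : Measure X}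
    [IsProbabilityMeasure μ] {p : X → ℝ} (hp : Measurable p) {U : Ω → ℝ} (hUm : Measurable U)
    (hU : P.map U = volume.restrict (Icc 0 1)) {a b : ℝ} (ha : 0 ≤ a) (hab : a ≤ b)
    (hb : b ≤ 1) :
    ∫ t in a..b, quantile P (fun ω => μ.real {x | U ω < p x}) t
      = ∫ x, max (min (1 - a) (p x) - (1 - b)) 0 ∂μ := by
  set g : ℝ → ℝ := fun u => μ.real {x | u < p x}
  calc ∫ t in a..b, quantile P (g ∘ U) t = ∫ t in a..b, g (1 - t) :=
        intervalIntegral.integral_congr_ae (ae_of_all _ fun t ht => by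
          rw [uIoc_of_le hab] at ht
          exact quantile_antitone_comp_of_map_eq_restrict_Icc hUm hU antitone_measureReal_lt
            ⟨ha.trans_lt ht.1, ht.2.trans hb⟩
            ((continuousWithinAt_Ici_measureReal_lt hp _).mono Ioi_subset_Ici_self))
    _ = ∫ u in 1 - b..1 - a, g u := intervalIntegral.integral_comp_sub_left g 1
    _ = _ := intervalIntegral_measureReal_lt hp (by linarith)

section MinMax

variable {X : Type*} [MeasurableSpace X] {μ : Measure X} {c : ℝ}

lemma mul_min_one_div (hc : 0 < c) (y : ℝ) : c * min 1 (y / c) = min c y := by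
  rw [mul_min_of_nonneg _ _ hc.le, mul_one, mul_div_cancel₀ _ hc.ne']

lemma one_div_mul_integral_min (hc : 0 < c) (f : X → ℝ) :
    1 / c * ∫ x, min c (f x) ∂μ = ∫ x, min 1 (f x / c) ∂μ := by
  simp_rw [← mul_min_one_div hc, integral_const_mul]
  field_simp

lemma one_div_mul_integral_max_sub (hc : 0 < c) [IsProbabilityMeasure μ] {f : X → ℝ}
    (hf : Measurable f) (hf0 : ∀ x, 0 ≤ f x) :
    1 / c * ∫ x, max (c - f x) 0 ∂μ = 1 - 1 / c * ∫ x, min c (f x) ∂μ := by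
  have hmin : Integrable (fun x => min c (f x)) μ :=
    .of_bound (by fun_prop) c (ae_of_all _ fun x => by
      rw [Real.norm_eq_abs, abs_of_nonneg (le_min hc.le (hf0 x))]
      exact min_le_left _ _)
  have hpt : ∀ x, max (c - f x) 0 = c - min c (f x) := fun x => by
    rw [← max_sub_sub_left, sub_self, max_comm]
  simp_rw [hpt, integral_sub (integrable_const c) hmin, integral_const, probReal_univ, one_smul]
  field_simp

end MinMax

theorem stmt_11
    {Ω X : Type*} [MeasurableSpace Ω] [MeasurableSpace X]
    (P : Measure Ω) [IsProbabilityMeasure P]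
    (μ : Measure X) [IsProbabilityMeasure μ]
    (p : X → ℝ) (hpm : Measurable p) (hp01 : ∀ x, p x ∈ Set.Icc (0:ℝ) 1)
    (U : Ω → ℝ) (hUm : Measurable U)
    (hU : Measure.map U P = volume.restrict (Set.Icc (0:ℝ) 1))
    (R : Ω → ℝ) (hR : ∀ ω, R ω = (μ {x | U ω < p x}).toReal)
    (FR : ℝ → ℝ)
    (hFR : ∀ a, FR a = sInf {t : ℝ | a ≤ (P {ω | R ω ≤ t}).toReal}) :
    ∀ α ∈ Set.Ioo (0:ℝ) 1,
      (1 / α) * (∫ t in (0:ℝ)..α, FR t)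
          = 1 - ∫ x, min 1 ((1 - p x) / α) ∂μ ∧
      (1 / (1 - α)) * (∫ t in α..(1:ℝ), FR t)
          = ∫ x, min 1 (p x / (1 - α)) ∂μ := by
  intro α ⟨hα0, hα1⟩
  obtain rfl : FR = quantile P R := funext hFR
  obtain rfl : R = fun ω => μ.real {x | U ω < p x} := funext hR
  constructor
  · have hpt : ∀ x, max (min (1 - 0) (p x) - (1 - α)) 0 = max (α - (1 - p x)) 0 := fun x => by
      rw [sub_zero, min_eq_right (hp01 x).2]
      congr 1
      ring
    rw [intervalIntegral_quantile_measureReal_lt hpm hUm hU le_rfl hα0.le hα1.le]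
    simp_rw [hpt]
    rw [one_div_mul_integral_max_sub hα0 (f := fun x => 1 - p x) (by fun_prop)
      fun x => sub_nonneg.2 (hp01 x).2, one_div_mul_integral_min hα0]
  · have hpt : ∀ x, max (min (1 - α) (p x) - (1 - 1)) 0 = min (1 - α) (p x) := fun x => by
      rw [sub_self, sub_zero, max_eq_left (le_min (by linarith) (hp01 x).1)]
    rw [intervalIntegral_quantile_measureReal_lt hpm hUm hU hα0.le hα1.le le_rfl]
    simp_rw [hpt]
    exact one_div_mul_integral_min (by linarith) p
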